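/- Let Γ be a discrete group, G a Γ-graded Hausdorff ample groupoid (with continuous cocycle c:G→Γ) such that G_ε = c⁻¹(ε) is strongly effective, and k a field. Then the correspondence U ↦ I(U) := span_k{1_B : B a compact open bisection with d(B) ⊆ U} is a lattice isomorphism from the lattice of open invariant subsets of G⁰ onto the lattice of graded two-sided ideals of A_k(G). -/

import Mathlib

/-!
The inverse of `U ↦ I(U)` is `I ↦ U_I`, the set of units at which some element of `I` does
not vanish. Every element of `A_k(G)` is a combination of indicators `1_B` of compact open
bisections, and convolving with `1_B` transports values along the arrows of `B`. Hence `I(U)`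
is exactly the set of `f ∈ A_k(G)` supported on `d⁻¹ U`, which is a graded ideal, and
`U_{I(U)} = U`, `I ⊆ I(U_I)`.

The converse `I(U_I) ⊆ I` for a graded ideal `I` is where strong effectiveness enters. Given
`f ∈ I` with `f u ≠ 0` at a unit `u`, its component of degree `ε` lies in `I` and is supported
in `G_ε`. Effectiveness of `G_ε` over the orbit closure of `u` produces, near a point `v` of
the orbit, a compact open set `V` of units such that no non-unit arrow in the support of `f`
starts and ends in `V`; then `1_V * f * 1_V` is a nonzero multiple of `1_V`, so `1_V ∈ I`.
Conjugating by a bisection through an arrow from `u` to `v` gives `1_W ∈ I` for a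
neighbourhood `W` of `u`, and compactness gives `1_B = 1_B * 1_W ∈ I` for each generator
`1_B` of `I(U_I)`.
-/

open Set Function

/-- A groupoid structure on a type `G`: a small category in which every morphism is
invertible, encoded with a total multiplication `mul` that is only meaningful on
composable pairs.  Here `d x = x⁻¹x` and `r x = xx⁻¹`, and a pair `(x, y)` is
composable exactly when `d x = r y`. -/
structure GroupoidStr (G : Type*) where
  mul : G → G → G
  inv : G → G
  inv_inv : ∀ x, inv (inv x) = x
  /-- `x · d x = x` -/
  mul_d : ∀ x, mul x (mul (inv x) x) = x
  /-- `r x · x = x` -/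
  r_mul : ∀ x, mul (mul x (inv x)) x = x
  /-- associativity on composable pairs -/
  assoc : ∀ x y z, mul (inv x) x = mul y (inv y) → mul (inv y) y = mul z (inv z) →
    mul (mul x y) z = mul x (mul y z)
  /-- `d (xy) = d y` for composable `x, y` -/
  d_comp : ∀ x y, mul (inv x) x = mul y (inv y) →
    mul (inv (mul x y)) (mul x y) = mul (inv y) y
  /-- `r (xy) = r x` for composable `x, y` -/
  r_comp : ∀ x y, mul (inv x) x = mul y (inv y) →
    mul (mul x y) (inv (mul x y)) = mul x (inv x)
  /-- `(xy)⁻¹ = y⁻¹x⁻¹` for composable `x, y` -/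
  inv_mul : ∀ x y, mul (inv x) x = mul y (inv y) → inv (mul x y) = mul (inv y) (inv x)
  /-- units are their own inverses -/
  unit_self_inv : ∀ x, inv (mul (inv x) x) = mul (inv x) x
  /-- units are idempotents -/
  unit_idem : ∀ x, mul (mul (inv x) x) (mul (inv x) x) = mul (inv x) x

namespace GroupoidStr

variable {G : Type*} (S : GroupoidStr G)

/-- The domain (source) `d x = x⁻¹ x` of `x`. -/
def d (x : G) : G := S.mul (S.inv x) x

/-- The range `r x = x x⁻¹` of `x`. -/
def r (x : G) : G := S.mul x (S.inv x)

/-- The unit space `G⁰ = d(G) = r(G)`. -/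
def unitSpace : Set G := Set.range S.d

/-- The isotropy bundle `Iso(G) = {x | d x = r x}`. -/
def IsoSet : Set G := {x | S.d x = S.r x}

/-- The orbit of a unit `u`: `{r γ : d γ = u}`. -/
def orbit (u : G) : Set G := S.r '' {γ : G | S.d γ = u}

/-- A subset `U` of the unit space is invariant if `d γ ∈ U` implies `r γ ∈ U`. -/
def IsInvariant (U : Set G) : Prop := ∀ γ : G, S.d γ ∈ U → S.r γ ∈ U

section Top

variable [TopologicalSpace G]

/-- `G` is a topological groupoid: inversion and composition (on the set of composable
pairs, with the relative product topology) are continuous. -/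
def IsTopological : Prop :=
  Continuous S.inv ∧
    Continuous fun p : {p : G × G // S.d p.1 = S.r p.2} => S.mul p.1.1 p.1.2

/-- An open bisection: an open set on which both `d` and `r` restrict to homeomorphisms
onto open subsets of the unit space. -/
def IsOpenBisection (U : Set G) : Prop :=
  IsOpen U ∧ Set.InjOn S.d U ∧ Set.InjOn S.r U ∧
    (∀ V ⊆ U, IsOpen V → IsOpen (S.d '' V)) ∧ (∀ V ⊆ U, IsOpen V → IsOpen (S.r '' V))

/-- An étale groupoid: there is a basis of open bisections (equivalently, `d` is a local
homeomorphism). -/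
def IsEtale : Prop := ∀ x : G, ∃ U, x ∈ U ∧ S.IsOpenBisection U

/-- An ample groupoid: there is a basis of compact open bisections. -/
def IsAmple : Prop :=
  ∀ (x : G) (W : Set G), x ∈ W → IsOpen W →
    ∃ U, x ∈ U ∧ U ⊆ W ∧ IsCompact U ∧ S.IsOpenBisection U

def IsCompactOpenBisection (U : Set G) : Prop := IsCompact U ∧ S.IsOpenBisection U

/-- `G` is effective if the interior of the isotropy bundle is the unit space. -/
def IsEffective : Prop := interior S.IsoSet = S.unitSpace

variable (R : Type*) [CommRing R]

/-- The underlying set of the Steinberg algebra `A_R(G)`: locally constant,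
compactly supported `R`-valued functions on `G`.  (The groupoid structure argument is
only used for the `A_R(G)` notation `S.SteinSet R`.) -/
def SteinSet (_Sg : GroupoidStr G) : Set (G → R) :=
  {f | IsLocallyConstant f ∧ HasCompactSupport f}

variable {R}

/-- Convolution: `(f * g) γ = ∑_{αβ = γ} f α * g β`. -/
noncomputable def conv (f g : G → R) : G → R := fun γ =>
  ∑ᶠ p ∈ {p : G × G | S.d p.1 = S.r p.2 ∧ S.mul p.1 p.2 = γ}, f p.1 * g p.2

end Top

end GroupoidStr

namespace GroupoidStr

variable {G : Type*} [TopologicalSpace G] (S : GroupoidStr G)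
variable {R : Type*} [CommRing R]

/-- A (two-sided, ring) ideal of the Steinberg algebra `A_R(G)`. -/
def IsIdealOf (I : Set (G → R)) : Prop :=
  I ⊆ S.SteinSet R ∧ (0 : G → R) ∈ I ∧
    (∀ f ∈ I, ∀ g ∈ I, f - g ∈ I) ∧
    (∀ f ∈ I, ∀ g ∈ S.SteinSet R, S.conv f g ∈ I ∧ S.conv g f ∈ I)

/-- A subset of the unit space which is open in the relative topology of `G⁰`. -/
def IsRelOpen (U : Set G) : Prop :=
  U ⊆ S.unitSpace ∧ ∃ W : Set G, IsOpen W ∧ U = W ∩ S.unitSpace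

end GroupoidStr

namespace GroupoidStr

variable {G : Type*} [TopologicalSpace G] (S : GroupoidStr G)

/-- The restriction `G|_D = {γ : d γ ∈ D, r γ ∈ D}` of the groupoid to a set `D`. -/
def restrictG (D : Set G) : Set G := {γ : G | S.d γ ∈ D ∧ S.r γ ∈ D}

/-- The interior of `A` relative to the subspace `B` (as a subset of `B`). -/
def relInt (_Sg : GroupoidStr G) (B A : Set G) : Set G :=
  {x : G | x ∈ B ∧ ∃ V : Set G, IsOpen V ∧ x ∈ V ∧ V ∩ B ⊆ A}

/-- `G` is strongly effective: for every nonempty (relatively) closed invariant subset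
`D` of `G⁰`, the restricted groupoid `G|_D` is effective, i.e. the interior (relative
to `G|_D`) of its isotropy bundle is its unit space `D`. -/
def IsStronglyEffective : Prop :=
  ∀ D : Set G, D ⊆ S.unitSpace → D.Nonempty →
    (∃ C : Set G, IsClosed C ∧ D = C ∩ S.unitSpace) → S.IsInvariant D →
    S.relInt (S.restrictG D) (S.IsoSet ∩ S.restrictG D) = D

variable (R : Type*) [CommRing R]

/-- The ideal `I(U) = span { 1_B : B a compact open bisection with d(B) ⊆ U }` of the
Steinberg algebra associated to an (open invariant) subset `U` of the unit space. -/
def idealOf (U : Set G) : Set (G → R) :=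
  (Submodule.span R {f : G → R | ∃ B : Set G,
      S.IsCompactOpenBisection B ∧ S.d '' B ⊆ U ∧
      f = B.indicator (fun _ => (1 : R))} : Submodule R (G → R))

end GroupoidStr

namespace GroupoidStr

variable {G : Type*} [TopologicalSpace G] (S : GroupoidStr G)

/-- The open subgroupoid `H` of `G` is strongly effective: for every nonempty
(relatively) closed invariant subset `D` of the unit space, the restriction `H|_D` is
effective. -/
def IsStronglyEffectiveOn (H : Set G) : Prop :=
  ∀ D : Set G, D ⊆ S.unitSpace → D.Nonempty →
    (∃ C : Set G, IsClosed C ∧ D = C ∩ S.unitSpace) →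
    (∀ γ ∈ H, S.d γ ∈ D → S.r γ ∈ D) →
    S.relInt (H ∩ S.restrictG D) (S.IsoSet ∩ (H ∩ S.restrictG D)) = D

variable {R : Type*} [CommRing R] {Γ : Type*}

/-- A graded ideal of `A_R(G)` (with the grading induced by a cocycle `c : G → Γ`):
an ideal containing each homogeneous component of each of its elements. -/
def IsGradedIdealOf (c : G → Γ) (I : Set (G → R)) : Prop :=
  S.IsIdealOf I ∧ ∀ f ∈ I, ∀ γ : Γ, ({x : G | c x = γ}.indicator f) ∈ I

end GroupoidStr

open Topology

namespace GroupoidStr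

variable {G : Type*} (S : GroupoidStr G)

section Algebra

variable {x y : G}

lemma d_inv (x : G) : S.d (S.inv x) = S.r x := by
  rw [d, r, S.inv_inv]

lemma r_inv (x : G) : S.r (S.inv x) = S.d x := by
  rw [d, r, S.inv_inv]

lemma mul_d_self (x : G) : S.mul x (S.d x) = x := S.mul_d x

lemma r_mul_self (x : G) : S.mul (S.r x) x = x := S.r_mul x

lemma d_mul_eq (h : S.d x = S.r y) : S.d (S.mul x y) = S.d y := S.d_comp x y h

lemma r_mul_eq (h : S.d x = S.r y) : S.r (S.mul x y) = S.r x := S.r_comp x y h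

lemma mul_assoc' {z : G} (h₁ : S.d x = S.r y) (h₂ : S.d y = S.r z) :
    S.mul (S.mul x y) z = S.mul x (S.mul y z) := S.assoc x y z h₁ h₂

lemma inv_d (x : G) : S.inv (S.d x) = S.d x := S.unit_self_inv x

lemma d_d (x : G) : S.d (S.d x) = S.d x := by
  rw [d, inv_d]; exact S.unit_idem x

lemma r_d (x : G) : S.r (S.d x) = S.d x := by
  rw [r, inv_d]; exact S.unit_idem x

lemma r_r (x : G) : S.r (S.r x) = S.r x := by
  rw [← S.d_inv x, r_d]

lemma mem_unitSpace_iff {u : G} : u ∈ S.unitSpace ↔ S.d u = u :=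
  ⟨fun ⟨x, hx⟩ => hx ▸ S.d_d x, fun h => ⟨u, h⟩⟩

lemma d_mem_unitSpace (x : G) : S.d x ∈ S.unitSpace := ⟨x, rfl⟩

lemma r_mem_unitSpace (x : G) : S.r x ∈ S.unitSpace := ⟨S.inv x, S.d_inv x⟩

lemma d_eq_self {u : G} (hu : u ∈ S.unitSpace) : S.d u = u := S.mem_unitSpace_iff.1 hu

lemma r_eq_self {u : G} (hu : u ∈ S.unitSpace) : S.r u = u := by
  obtain ⟨x, rfl⟩ := hu; exact S.r_d x

lemma inv_eq_self {u : G} (hu : u ∈ S.unitSpace) : S.inv u = u := by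
  obtain ⟨x, rfl⟩ := hu; exact S.inv_d x

lemma unit_mul_eq (h : S.r y = x) : S.mul x y = y := h ▸ S.r_mul_self y

lemma mul_inv_cancel_right' (h : S.d x = S.r y) : S.mul (S.mul x y) (S.inv y) = x := by
  rw [S.mul_assoc' h (S.r_inv y).symm, ← r, ← h, mul_d_self]

lemma inv_mul_cancel_left' (h : S.d x = S.r y) : S.mul (S.inv x) (S.mul x y) = y := by
  rw [← S.mul_assoc' (S.d_inv x) h, ← d, h, r_mul_self]

lemma mul_inv_mul_cancel (h : S.r x = S.r y) : S.mul x (S.mul (S.inv x) y) = y := by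
  have := S.inv_mul_cancel_left' (x := S.inv x) (y := y) (by rw [d_inv, h])
  rwa [S.inv_inv] at this

lemma mul_mul_inv_cancel (h : S.d x = S.d y) : S.mul (S.mul x (S.inv y)) y = x := by
  have := S.mul_inv_cancel_right' (x := x) (y := S.inv y) (by rw [r_inv, h])
  rwa [S.inv_inv] at this

lemma inv_image_eq_preimage (A : Set G) : S.inv '' A = S.inv ⁻¹' A :=
  congrFun (Function.Involutive.image_eq_preimage_symm S.inv_inv) A

lemma injOn_r_inv_image {B : Set G} (hB : InjOn S.d B) : InjOn S.r (S.inv '' B) := by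
  rintro _ ⟨a, ha, rfl⟩ _ ⟨b, hb, rfl⟩ h
  rw [S.r_inv, S.r_inv] at h
  rw [hB ha hb h]

lemma injOn_d_inv_image {B : Set G} (hB : InjOn S.r B) : InjOn S.d (S.inv '' B) := by
  rintro _ ⟨a, ha, rfl⟩ _ ⟨b, hb, rfl⟩ h
  rw [S.d_inv, S.d_inv] at h
  rw [hB ha hb h]

lemma injOn_d_of_subset_unitSpace {V : Set G} (hV : V ⊆ S.unitSpace) : InjOn S.d V :=
  fun _ hx _ hy h => by rwa [S.d_eq_self (hV hx), S.d_eq_self (hV hy)] at h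

lemma injOn_r_of_subset_unitSpace {V : Set G} (hV : V ⊆ S.unitSpace) : InjOn S.r V :=
  fun _ hx _ hy h => by rwa [S.r_eq_self (hV hx), S.r_eq_self (hV hy)] at h

lemma d_image_of_subset_unitSpace {V : Set G} (hV : V ⊆ S.unitSpace) : S.d '' V = V :=
  (image_congr fun _ hx => S.d_eq_self (hV hx)).trans (image_id V)

lemma r_image_of_subset_unitSpace {V : Set G} (hV : V ⊆ S.unitSpace) : S.r '' V = V :=
  (image_congr fun _ hx => S.r_eq_self (hV hx)).trans (image_id V)

lemma mem_orbit_self {u : G} (hu : u ∈ S.unitSpace) : u ∈ S.orbit u :=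
  ⟨u, S.d_eq_self hu, S.r_eq_self hu⟩

lemma orbit_subset_unitSpace (u : G) : S.orbit u ⊆ S.unitSpace := by
  rintro _ ⟨γ, -, rfl⟩; exact S.r_mem_unitSpace γ

lemma isInvariant_orbit (u : G) : S.IsInvariant (S.orbit u) := by
  rintro γ ⟨δ, hδu, hδγ⟩
  exact ⟨S.mul γ δ, (S.d_mul_eq hδγ.symm).trans hδu, S.r_mul_eq hδγ.symm⟩

lemma map_eq_one_of_mem_unitSpace {Γ : Type*} [Group Γ] (c : G → Γ)
    (hc_mul : ∀ x y : G, S.d x = S.r y → c (S.mul x y) = c x * c y) {u : G}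
    (hu : u ∈ S.unitSpace) : c u = 1 := by
  have h := hc_mul u u (by rw [S.d_eq_self hu, S.r_eq_self hu])
  rw [S.unit_mul_eq (S.r_eq_self hu)] at h
  exact mul_eq_left.1 h.symm

def setMul (A B : Set G) : Set G := {x | ∃ a ∈ A, ∃ b ∈ B, S.d a = S.r b ∧ S.mul a b = x}

end Algebra

section Topology

variable [TopologicalSpace G]

lemma exists_mem_isCompactOpenBisection (hAmple : S.IsAmple) (x : G) :
    ∃ B, x ∈ B ∧ S.IsCompactOpenBisection B :=
  let ⟨B, hxB, _, hB⟩ := hAmple x univ (mem_univ x) isOpen_univ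
  ⟨B, hxB, hB⟩

lemma continuousOn_mul (hTop : S.IsTopological) {X : Type*} [TopologicalSpace X]
    {f g : X → G} {s : Set X} (hf : ContinuousOn f s) (hg : ContinuousOn g s)
    (hfg : ∀ a ∈ s, S.d (f a) = S.r (g a)) : ContinuousOn (fun a => S.mul (f a) (g a)) s := by
  rw [continuousOn_iff_continuous_domRestrict] at hf hg ⊢
  exact hTop.2.comp ((hf.prodMk hg).subtype_mk fun a => hfg a.1 a.2)

lemma continuous_inv (hTop : S.IsTopological) : Continuous S.inv := hTop.1

lemma continuous_d (hTop : S.IsTopological) : Continuous S.d :=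
  continuousOn_univ.1 <|
    S.continuousOn_mul hTop (S.continuous_inv hTop).continuousOn continuousOn_id
      fun x _ => S.d_inv x

lemma continuous_r (hTop : S.IsTopological) : Continuous S.r :=
  continuousOn_univ.1 <|
    S.continuousOn_mul hTop continuousOn_id (S.continuous_inv hTop).continuousOn
      fun x _ => (S.r_inv x).symm

lemma isOpen_inv_image (hTop : S.IsTopological) {A : Set G} (hA : IsOpen A) :
    IsOpen (S.inv '' A) := by
  rw [inv_image_eq_preimage]; exact hA.preimage (S.continuous_inv hTop)

section Bisections

variable {S} {B : Set G}

lemma IsOpenBisection.isOpen (hB : S.IsOpenBisection B) : IsOpen B := hB.1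

lemma IsOpenBisection.injOn_d (hB : S.IsOpenBisection B) : InjOn S.d B := hB.2.1

lemma IsOpenBisection.isOpen_d_image (hB : S.IsOpenBisection B) {V : Set G} (hVB : V ⊆ B)
    (hV : IsOpen V) : IsOpen (S.d '' V) :=
  hB.2.2.2.1 V hVB hV

lemma IsOpenBisection.mono (hB : S.IsOpenBisection B) {C : Set G} (hC : IsOpen C)
    (hCB : C ⊆ B) : S.IsOpenBisection C :=
  ⟨hC, hB.2.1.mono hCB, hB.2.2.1.mono hCB, fun V hV => hB.2.2.2.1 V (hV.trans hCB),
    fun V hV => hB.2.2.2.2 V (hV.trans hCB)⟩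

lemma IsCompactOpenBisection.isCompact (hB : S.IsCompactOpenBisection B) : IsCompact B := hB.1

lemma IsCompactOpenBisection.isOpen (hB : S.IsCompactOpenBisection B) : IsOpen B := hB.2.1

lemma IsCompactOpenBisection.injOn_d (hB : S.IsCompactOpenBisection B) : InjOn S.d B :=
  hB.2.2.1

lemma IsCompactOpenBisection.injOn_r (hB : S.IsCompactOpenBisection B) : InjOn S.r B :=
  hB.2.2.2.1

lemma IsCompactOpenBisection.isOpen_d_image (hB : S.IsCompactOpenBisection B) {V : Set G}
    (hVB : V ⊆ B) (hV : IsOpen V) : IsOpen (S.d '' V) :=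
  hB.2.2.2.2.1 V hVB hV

lemma IsCompactOpenBisection.isOpen_r_image (hB : S.IsCompactOpenBisection B) {V : Set G}
    (hVB : V ⊆ B) (hV : IsOpen V) : IsOpen (S.r '' V) :=
  hB.2.2.2.2.2 V hVB hV

lemma IsCompactOpenBisection.inter (hB : S.IsCompactOpenBisection B) {C : Set G}
    (hC : IsClopen C) : S.IsCompactOpenBisection (B ∩ C) :=
  ⟨hB.isCompact.inter_right hC.1, hB.2.mono (hB.isOpen.inter hC.2) inter_subset_left⟩

lemma IsCompactOpenBisection.inv (hB : S.IsCompactOpenBisection B) (hTop : S.IsTopological) :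
    S.IsCompactOpenBisection (S.inv '' B) := by
  have hd : ∀ V, S.d '' V = S.r '' (S.inv '' V) := fun V => by
    rw [image_image]; exact image_congr fun x _ => (S.r_inv x).symm
  have hr : ∀ V, S.r '' V = S.d '' (S.inv '' V) := fun V => by
    rw [image_image]; exact image_congr fun x _ => (S.d_inv x).symm
  have hsub : ∀ V ⊆ S.inv '' B, IsOpen V → S.inv '' V ⊆ B ∧ IsOpen (S.inv '' V) :=
    fun V hV hVo => ⟨fun _ ⟨v, hv, hx⟩ => by
      obtain ⟨b, hb, rfl⟩ := hV hv; rwa [← hx, S.inv_inv], S.isOpen_inv_image hTop hVo⟩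
  refine ⟨hB.isCompact.image (S.continuous_inv hTop), S.isOpen_inv_image hTop hB.isOpen,
    S.injOn_d_inv_image hB.injOn_r, S.injOn_r_inv_image hB.injOn_d, fun V hV hVo => ?_,
    fun V hV hVo => ?_⟩
  · rw [hd]; exact hB.isOpen_r_image (hsub V hV hVo).1 (hsub V hV hVo).2
  · rw [hr]; exact hB.isOpen_d_image (hsub V hV hVo).1 (hsub V hV hVo).2

end Bisections

lemma isEtale_of_isAmple (hAmple : S.IsAmple) : S.IsEtale := fun x =>
  let ⟨B, hxB, hB⟩ := S.exists_mem_isCompactOpenBisection hAmple x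
  ⟨B, hxB, hB.2⟩

/-- If `x` and `d x` both lie in an open bisection `B`, then `x = d x` since `d (d x) = d x`;
so `B ∩ d⁻¹ B` is an open set of units around each unit of `B`. -/
lemma isOpen_unitSpace (hTop : S.IsTopological) (hEt : S.IsEtale) : IsOpen S.unitSpace := by
  refine isOpen_iff_forall_mem_open.2 fun u hu => ?_
  obtain ⟨B, huB, hB⟩ := hEt u
  refine ⟨B ∩ S.d ⁻¹' B, fun x hx => ⟨x, hB.injOn_d hx.2 hx.1 (S.d_d x)⟩,
    hB.isOpen.inter (hB.isOpen.preimage (S.continuous_d hTop)), huB, ?_⟩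
  rwa [mem_preimage, S.d_eq_self hu]

lemma isRelOpen_iff (hTop : S.IsTopological) (hEt : S.IsEtale) {U : Set G} :
    S.IsRelOpen U ↔ IsOpen U ∧ U ⊆ S.unitSpace := by
  refine ⟨fun ⟨hU, W, hW, hUW⟩ => ⟨hUW ▸ hW.inter (S.isOpen_unitSpace hTop hEt), hU⟩,
    fun ⟨hU, hUG⟩ => ⟨hUG, U, hU, (inter_eq_left.2 hUG).symm⟩⟩

lemma exists_finset_cover (hAmple : S.IsAmple) {K : Set G} (hK : IsCompact K)
    {W : G → Set G} (hW : ∀ x ∈ K, W x ∈ 𝓝 x) :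
    ∃ 𝒮 : Finset (Set G), (∀ B ∈ 𝒮, S.IsCompactOpenBisection B ∧ ∃ x ∈ K, B ⊆ W x) ∧
      K ⊆ ⋃ B ∈ 𝒮, B := by
  classical
  have : ∀ x ∈ K, ∃ B, x ∈ B ∧ B ⊆ W x ∧ S.IsCompactOpenBisection B := fun x hx => by
    obtain ⟨O, hOW, hO, hxO⟩ := mem_nhds_iff.1 (hW x hx)
    obtain ⟨B, hxB, hBO, hB⟩ := hAmple x O hxO hO
    exact ⟨B, hxB, hBO.trans hOW, hB⟩
  choose! B hxB hBW hB using this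
  obtain ⟨t, htK, hKt⟩ :=
    hK.elim_nhds_subcover B fun x hx => (hB x hx).isOpen.mem_nhds (hxB x hx)
  refine ⟨t.image B, ?_, by rwa [Finset.set_biUnion_finset_image]⟩
  simp only [Finset.mem_image, forall_exists_index, and_imp, forall_apply_eq_imp_iff₂]
  exact fun x hx => ⟨hB x (htK x hx), x, htK x hx, hBW x (htK x hx)⟩

lemma exists_isCompact_isOpen_between (hAmple : S.IsAmple) {K O : Set G} (hK : IsCompact K)
    (hO : IsOpen O) (hKO : K ⊆ O) : ∃ W, IsCompact W ∧ IsOpen W ∧ K ⊆ W ∧ W ⊆ O := by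
  obtain ⟨𝒮, h𝒮, hK𝒮⟩ := S.exists_finset_cover hAmple hK fun x hx => hO.mem_nhds (hKO hx)
  refine ⟨⋃ B ∈ 𝒮, B, 𝒮.isCompact_biUnion fun B hB => (h𝒮 B hB).1.isCompact,
    isOpen_biUnion fun B hB => (h𝒮 B hB).1.isOpen, hK𝒮, iUnion₂_subset fun B hB => ?_⟩
  obtain ⟨-, x, -, hB⟩ := h𝒮 B hB
  exact hB

lemma continuousOn_invFunOn_d [Nonempty G] {B : Set G} (hB : S.IsOpenBisection B) :
    ContinuousOn (invFunOn S.d B) (S.d '' B) := by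
  refine continuousOn_iff.2 fun v ⟨b, hb, hbv⟩ t ht hvt => ?_
  refine ⟨S.d '' (B ∩ t), hB.isOpen_d_image inter_subset_left (hB.isOpen.inter ht), ?_, ?_⟩
  · subst hbv
    rw [hB.injOn_d.leftInvOn_invFunOn hb] at hvt
    exact ⟨b, ⟨hb, hvt⟩, rfl⟩
  · rintro _ ⟨⟨c, ⟨hcB, hct⟩, rfl⟩, -⟩
    rwa [mem_preimage, hB.injOn_d.leftInvOn_invFunOn hcB]

section

variable {S}

lemma IsInvariant.closure (hTop : S.IsTopological) (hEt : S.IsEtale) {U : Set G}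
    (hU : S.IsInvariant U) : S.IsInvariant (closure U) := by
  intro γ hγ
  rw [mem_closure_iff] at hγ ⊢
  intro N hN hγN
  obtain ⟨B, hγB, hB⟩ := hEt γ
  -- `d (B ∩ r⁻¹ N)` is an open neighbourhood of `d γ`, so it meets `U`
  obtain ⟨_, ⟨y, hy, rfl⟩, hyU⟩ := hγ _ (hB.isOpen_d_image inter_subset_left
    (hB.isOpen.inter (hN.preimage (S.continuous_r hTop)))) ⟨γ, ⟨hγB, hγN⟩, rfl⟩
  exact ⟨S.r y, hy.2, hU y hyU⟩

end

variable [T2Space G]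

lemma isClosed_unitSpace (hTop : S.IsTopological) : IsClosed S.unitSpace := by
  have : S.unitSpace = {x | S.d x = x} := Set.ext fun _ => S.mem_unitSpace_iff
  exact this ▸ isClosed_eq (S.continuous_d hTop) continuous_id

lemma isCompact_setMul (hTop : S.IsTopological) {A B : Set G} (hA : IsCompact A)
    (hB : IsCompact B) : IsCompact (S.setMul A B) := by
  have hcomp : IsClosed {p : G × G | S.d p.1 = S.r p.2} :=
    isClosed_eq ((S.continuous_d hTop).comp continuous_fst)
      ((S.continuous_r hTop).comp continuous_snd)
  have : S.setMul A B =
      (fun p : G × G => S.mul p.1 p.2) '' ((A ×ˢ B) ∩ {p | S.d p.1 = S.r p.2}) := by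
    ext x
    constructor
    · rintro ⟨a, ha, b, hb, hab, rfl⟩; exact ⟨(a, b), ⟨⟨ha, hb⟩, hab⟩, rfl⟩
    · rintro ⟨⟨a, b⟩, ⟨⟨ha, hb⟩, hab⟩, rfl⟩; exact ⟨a, ha, b, hb, hab, rfl⟩
  rw [this]
  exact ((hA.prod hB).inter_right hcomp).image_of_continuousOn
    (S.continuousOn_mul hTop continuous_fst.continuousOn continuous_snd.continuousOn
      fun p hp => hp.2)

/-- The image of the compact set `K` under `x ↦ (d x, r x)` is closed and misses `(v, v)`. -/
lemma exists_isOpen_not_fixed (hTop : S.IsTopological) {K : Set G}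
    (hK : IsCompact K) {v : G} (hv : ∀ x ∈ K, ¬(S.d x = v ∧ S.r x = v)) :
    ∃ V, IsOpen V ∧ v ∈ V ∧ ∀ x ∈ K, ¬(S.d x ∈ V ∧ S.r x ∈ V) := by
  have hc : IsClosed ((fun x => (S.d x, S.r x)) '' K) :=
    (hK.image ((S.continuous_d hTop).prodMk (S.continuous_r hTop))).isClosed
  have hvv : (v, v) ∉ (fun x => (S.d x, S.r x)) '' K :=
    fun ⟨x, hx, h⟩ => hv x hx (Prod.ext_iff.1 h)
  obtain ⟨V₁, V₂, hV₁, hV₂, hv₁, hv₂, hsub⟩ := isOpen_prod_iff.1 hc.isOpen_compl v v hvv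
  exact ⟨V₁ ∩ V₂, hV₁.inter hV₂, ⟨hv₁, hv₂⟩,
    fun x hx hxV => hsub ⟨hxV.1.1, hxV.2.2⟩ ⟨x, hx, rfl⟩⟩

end Topology

section Convolution

variable {R : Type*} [CommRing R]

lemma conv_apply_eq_of_unique {f g : G → R} {x a b : G} (hab : S.d a = S.r b)
    (hx : S.mul a b = x)
    (huniq : ∀ a' b', S.d a' = S.r b' → S.mul a' b' = x → f a' * g b' ≠ 0 → a' = a ∧ b' = b) :
    S.conv f g x = f a * g b := by
  rw [conv, finsum_mem_inter_support_eq _ _ {(a, b)}, finsum_mem_singleton]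
  ext ⟨a', b'⟩
  simp only [mem_inter_iff, mem_ofPred_eq, mem_singleton_iff, mem_support, Prod.mk.injEq]
  constructor
  · rintro ⟨⟨h₁, h₂⟩, h₃⟩; exact ⟨huniq a' b' h₁ h₂ h₃, h₃⟩
  · rintro ⟨⟨rfl, rfl⟩, h₃⟩; exact ⟨⟨hab, hx⟩, h₃⟩

lemma conv_apply_eq_zero {f g : G → R} {x : G}
    (h : ∀ a b, S.d a = S.r b → S.mul a b = x → f a * g b = 0) : S.conv f g x = 0 :=
  finsum_mem_eq_zero_of_forall_eq_zero fun p hp => h p.1 p.2 hp.1 hp.2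

lemma conv_apply_eq_finsum_factorizations (f g : G → R) (x : G) :
    S.conv f g x =
      ∑ᶠ p ∈ {p : G × G | S.d p.1 = S.r p.2 ∧ S.mul p.1 p.2 = x ∧ f p.1 ≠ 0}, f p.1 * g p.2 :=
  finsum_mem_inter_support_eq _ _ _ <| Set.ext fun _ =>
    ⟨fun ⟨⟨h₁, h₂⟩, h₃⟩ => ⟨⟨h₁, h₂, left_ne_zero_of_mul h₃⟩, h₃⟩,
      fun ⟨⟨h₁, h₂, _⟩, h₃⟩ => ⟨⟨h₁, h₂⟩, h₃⟩⟩

lemma conv_indicator_apply {C : Set G} (hC : InjOn S.d C) (f : G → R) (b : R) {x β : G}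
    (hβ : β ∈ C) (hβx : S.d β = S.d x) :
    S.conv f (C.indicator fun _ => b) x = f (S.mul x (S.inv β)) * b := by
  have hcomp : S.d (S.mul x (S.inv β)) = S.r β := by
    rw [S.d_mul_eq (by rw [S.r_inv, hβx]), S.d_inv]
  rw [S.conv_apply_eq_of_unique hcomp (S.mul_mul_inv_cancel hβx.symm), indicator_of_mem hβ]
  intro a' b' hab' hx' hne
  have hb' : b' = β :=
    hC (mem_of_indicator_ne_zero (right_ne_zero_of_mul hne)) hβ
      (by rw [← S.d_mul_eq hab', hx', hβx])
  subst hb'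
  exact ⟨by rw [← hx', S.mul_inv_cancel_right' hab'], rfl⟩

lemma conv_indicator_apply_of_notMem {C : Set G} (f : G → R) (b : R) {x : G}
    (hx : S.d x ∉ S.d '' C) : S.conv f (C.indicator fun _ => b) x = 0 :=
  S.conv_apply_eq_zero fun _ c hac hcx => by
    rw [indicator_of_notMem fun hc => hx ⟨c, hc, by rw [← hcx, S.d_mul_eq hac]⟩, mul_zero]

lemma indicator_conv_apply {A : Set G} (hA : InjOn S.r A) (b : R) (f : G → R) {x α : G}
    (hα : α ∈ A) (hαx : S.r α = S.r x) :
    S.conv (A.indicator fun _ => b) f x = b * f (S.mul (S.inv α) x) := by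
  have hcomp : S.d α = S.r (S.mul (S.inv α) x) := by
    rw [S.r_mul_eq (by rw [S.d_inv, hαx]), S.r_inv]
  rw [S.conv_apply_eq_of_unique hcomp (S.mul_inv_mul_cancel hαx), indicator_of_mem hα]
  intro a' b' hab' hx' hne
  have ha' : a' = α :=
    hA (mem_of_indicator_ne_zero (left_ne_zero_of_mul hne)) hα
      (by rw [← S.r_mul_eq hab', hx', hαx])
  subst ha'
  exact ⟨rfl, by rw [← hx', S.inv_mul_cancel_left' hab']⟩

lemma indicator_conv_apply_of_notMem {A : Set G} (b : R) (f : G → R) {x : G}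
    (hx : S.r x ∉ S.r '' A) : S.conv (A.indicator fun _ => b) f x = 0 :=
  S.conv_apply_eq_zero fun a _ hac hax => by
    rw [indicator_of_notMem fun ha => hx ⟨a, ha, by rw [← hax, S.r_mul_eq hac]⟩, zero_mul]

lemma unit_indicator_conv {V : Set G} (hV : V ⊆ S.unitSpace) (b : R) (f : G → R) :
    S.conv (V.indicator fun _ => b) f = (S.r ⁻¹' V).indicator fun x => b * f x := by
  funext x
  by_cases hx : x ∈ S.r ⁻¹' V
  · rw [S.indicator_conv_apply (S.injOn_r_of_subset_unitSpace hV) b f hx (S.r_r x),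
      indicator_of_mem hx, S.inv_eq_self (S.r_mem_unitSpace x), S.r_mul_self]
  · rw [S.indicator_conv_apply_of_notMem b f (by rwa [S.r_image_of_subset_unitSpace hV]),
      indicator_of_notMem hx]

lemma conv_unit_indicator {V : Set G} (hV : V ⊆ S.unitSpace) (f : G → R) (b : R) :
    S.conv f (V.indicator fun _ => b) = (S.d ⁻¹' V).indicator fun x => f x * b := by
  funext x
  by_cases hx : x ∈ S.d ⁻¹' V
  · rw [S.conv_indicator_apply (S.injOn_d_of_subset_unitSpace hV) f b hx (S.d_d x),
      indicator_of_mem hx, S.inv_eq_self (S.d_mem_unitSpace x), S.mul_d_self]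
  · rw [S.conv_indicator_apply_of_notMem f b (by rwa [S.d_image_of_subset_unitSpace hV]),
      indicator_of_notMem hx]

/-- `1_V * f * 1_V` restricts `f` to the arrows that start and end in `V`. -/
lemma unit_indicator_conv_conv_unit_indicator {V : Set G} (hV : V ⊆ S.unitSpace) {f : G → R}
    {a b : R} (hab : a * b = 1) (hfV : ∀ x ∈ V, f x = a)
    (hf : ∀ x ∉ S.unitSpace, S.d x ∈ V → S.r x ∈ V → f x = 0) :
    S.conv (V.indicator fun _ => 1) (S.conv f (V.indicator fun _ => b)) =
      V.indicator fun _ => 1 := by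
  rw [S.conv_unit_indicator hV, S.unit_indicator_conv hV]
  funext x
  by_cases hx : x ∈ S.unitSpace
  · by_cases hxV : x ∈ V <;> simp [S.d_eq_self hx, S.r_eq_self hx, hxV, hfV x, hab]
  · rw [indicator_of_notMem fun h => hx (hV h)]
    by_cases hd : S.d x ∈ V <;> by_cases hr : S.r x ∈ V <;> simp [hd, hr, hf x hx]

lemma support_conv_subset (f g : G → R) :
    support (S.conv f g) ⊆ S.setMul (support f) (support g) := fun x hx => by
  by_contra h
  exact hx (S.conv_apply_eq_zero fun a b hab hx => by
    by_contra hne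
    exact h ⟨a, left_ne_zero_of_mul hne, b, right_ne_zero_of_mul hne, hab, hx⟩)

lemma indicator_conv_indicator {A : Set G} (hA : InjOn S.r A) (C : Set G) :
    S.conv (A.indicator fun _ => (1 : R)) (C.indicator fun _ => 1) =
      (S.setMul A C).indicator fun _ => 1 := by
  funext x
  by_cases hx : x ∈ S.setMul A C
  · obtain ⟨a, ha, c, hc, hac, rfl⟩ := hx
    rw [S.indicator_conv_apply hA 1 _ ha (S.r_mul_eq hac).symm, S.inv_mul_cancel_left' hac,
      indicator_of_mem hc,
      indicator_of_mem (show S.mul a c ∈ S.setMul A C from ⟨a, ha, c, hc, hac, rfl⟩), one_mul]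
  · rw [indicator_of_notMem hx]
    refine S.conv_apply_eq_zero fun a c hac hacx => ?_
    by_contra hne
    exact hx ⟨a, mem_of_indicator_ne_zero (left_ne_zero_of_mul hne), c,
      mem_of_indicator_ne_zero (right_ne_zero_of_mul hne), hac, hacx⟩

lemma setMul_of_subset_unitSpace_left {V : Set G} (hV : V ⊆ S.unitSpace) (A : Set G) :
    S.setMul V A = A ∩ S.r ⁻¹' V := by
  ext x
  constructor
  · rintro ⟨v, hv, a, ha, hva, rfl⟩
    rw [← S.d_eq_self (hV hv), hva, S.r_mul_self]
    exact ⟨ha, by rw [mem_preimage, ← hva, S.d_eq_self (hV hv)]; exact hv⟩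
  · rintro ⟨hx, hxV⟩
    exact ⟨S.r x, hxV, x, hx, S.d_eq_self (S.r_mem_unitSpace x), S.r_mul_self x⟩

lemma setMul_inv_image {B C : Set G} (hB : InjOn S.r B) (hCB : C ⊆ B) :
    S.setMul (S.inv '' B) C = S.d '' C := by
  ext x
  constructor
  · rintro ⟨_, ⟨b, hb, rfl⟩, c, hc, hbc, rfl⟩
    rw [S.d_inv] at hbc
    rw [hB hb (hCB hc) hbc]
    exact ⟨c, hc, rfl⟩
  · rintro ⟨c, hc, rfl⟩
    exact ⟨S.inv c, ⟨c, hCB hc, rfl⟩, c, hc, S.d_inv c, rfl⟩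

lemma inv_indicator_conv_unit_indicator_conv {B : Set G} (hBd : InjOn S.d B)
    (hBr : InjOn S.r B) {V : Set G} (hV : V ⊆ S.unitSpace) :
    S.conv ((S.inv '' B).indicator fun _ => (1 : R))
        (S.conv (V.indicator fun _ => 1) (B.indicator fun _ => 1)) =
      (S.d '' (B ∩ S.r ⁻¹' V)).indicator fun _ => 1 := by
  rw [S.indicator_conv_indicator (S.injOn_r_of_subset_unitSpace hV),
    S.setMul_of_subset_unitSpace_left hV, S.indicator_conv_indicator (S.injOn_r_inv_image hBd),
    S.setMul_inv_image hBr inter_subset_left]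

def unitSupport (I : Set (G → R)) : Set G := {u ∈ S.unitSpace | ∃ f ∈ I, f u ≠ 0}

lemma unitSupport_mono {I J : Set (G → R)} (hIJ : I ⊆ J) : S.unitSupport I ⊆ S.unitSupport J :=
  fun _ ⟨hu, f, hf, hfu⟩ => ⟨hu, f, hIJ hf, hfu⟩

end Convolution

section SteinbergAlgebra

variable [TopologicalSpace G] (R : Type*) [CommRing R]

def steinbergSubmodule : Submodule R (G → R) where
  carrier := S.SteinSet R
  add_mem' hf hg := ⟨hf.1.add hg.1, hf.2.add hg.2⟩
  zero_mem' := ⟨IsLocallyConstant.const 0, HasCompactSupport.zero⟩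
  smul_mem' a _ hf := ⟨hf.1.comp (a • ·), hf.2.smul_left (f := fun _ => a)⟩

variable {R}

lemma isClopen_support {f : G → R} (hf : f ∈ S.SteinSet R) : IsClopen (support f) := by
  simpa only [← compl_ofPred, support] using (hf.1.isClopen_fiber 0).compl

lemma isCompact_support {f : G → R} (hf : f ∈ S.SteinSet R) : IsCompact (support f) :=
  hf.2.of_isClosed_subset (S.isClopen_support hf).1 (subset_tsupport f)

lemma indicator_mem_steinSet {f : G → R} (hf : f ∈ S.SteinSet R) {U : Set G}
    (hU : IsClopen U) : U.indicator f ∈ S.SteinSet R :=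
  ⟨(LocallyConstant.indicator ⟨f, hf.1⟩ hU).isLocallyConstant,
    hf.2.mono fun _ hx => (mem_support.1 hx |> indicator_apply_ne_zero.1).2⟩

lemma indicator_const_mem_steinSet [T2Space G] {s : Set G} (hsc : IsCompact s)
    (hso : IsOpen s) (b : R) : s.indicator (fun _ => b) ∈ S.SteinSet R :=
  ⟨(LocallyConstant.indicator (LocallyConstant.const G b) ⟨hsc.isClosed, hso⟩).isLocallyConstant,
    HasCompactSupport.intro hsc fun _ hx => indicator_of_notMem hx _⟩

lemma idealOf_subset_steinSet [T2Space G] (U : Set G) : S.idealOf R U ⊆ S.SteinSet R := by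
  refine fun f hf => (Submodule.span_le (p := S.steinbergSubmodule R)).2 ?_ hf
  rintro _ ⟨B, hB, -, rfl⟩
  exact S.indicator_const_mem_steinSet hB.isCompact hB.isOpen 1

lemma support_subset_of_mem_idealOf {U : Set G} {f : G → R} (hf : f ∈ S.idealOf R U) :
    support f ⊆ S.d ⁻¹' U := by
  induction hf using Submodule.span_induction with
  | mem _ h =>
    obtain ⟨B, -, hBU, rfl⟩ := h
    exact fun x hx => hBU ⟨x, mem_of_indicator_ne_zero hx, rfl⟩
  | zero => simp
  | add f g _ _ hf hg => exact (support_add f g).trans (union_subset hf hg)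
  | smul a f _ hf => exact (support_const_smul_subset a f).trans hf

lemma idealOf_mono {U V : Set G} (hUV : U ⊆ V) :
    S.idealOf R U ⊆ S.idealOf R V :=
  Submodule.span_mono fun _ ⟨B, hB, hBU, hf⟩ => ⟨B, hB, hBU.trans hUV, hf⟩

lemma indicator_mem_idealOf_of_finset_cover [T2Space G] {f : G → R} {U : Set G}
    (hfU : support f ⊆ S.d ⁻¹' U) (𝒮 : Finset (Set G))
    (h𝒮 : ∀ B ∈ 𝒮, S.IsCompactOpenBisection B ∧ B ⊆ support f ∧ ∃ a, ∀ x ∈ B, f x = a)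
    {C : Set G} (hC : IsClopen C) (hC𝒮 : C ∩ support f ⊆ ⋃ B ∈ 𝒮, B) :
    C.indicator f ∈ S.idealOf R U := by
  classical
  induction 𝒮 using Finset.induction_on generalizing C with
  | empty =>
    rw [indicator_eq_zero'.2 (disjoint_left.2 fun x hxf hxC => by simpa using hC𝒮 ⟨hxC, hxf⟩)]
    exact zero_mem _
  | insert B 𝒮 _ ih =>
    obtain ⟨hB, hBf, a, ha⟩ := h𝒮 B (Finset.mem_insert_self B 𝒮)
    have hsplit : C.indicator f = a • (B ∩ C).indicator (fun _ => 1) + (C \ B).indicator f := by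
      rw [← indicator_self_add_compl B (C.indicator f), indicator_indicator, indicator_indicator,
        ← sdiff_eq_compl_inter, indicator_congr fun x hx => ha x hx.1]
      ext x
      simp [indicator_apply]
    rw [hsplit]
    refine add_mem (Submodule.smul_mem _ a (Submodule.subset_span ⟨B ∩ C, hB.inter hC, ?_, rfl⟩))
      (ih (fun B' hB' => h𝒮 B' (Finset.mem_insert_of_mem hB'))
        (hC.diff ⟨hB.isCompact.isClosed, hB.isOpen⟩) fun x hx => ?_)
    · exact image_subset_iff.2 ((inter_subset_left.trans hBf).trans hfU)
    · have := hC𝒮 ⟨hx.1.1, hx.2⟩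
      simp only [Finset.set_biUnion_insert, mem_union] at this
      exact this.resolve_left hx.1.2

lemma mem_idealOf_of_support_subset [T2Space G] (hAmple : S.IsAmple) {f : G → R}
    (hf : f ∈ S.SteinSet R) {U : Set G} (hfU : support f ⊆ S.d ⁻¹' U) :
    f ∈ S.idealOf R U := by
  obtain ⟨𝒮, h𝒮, hcover⟩ := S.exists_finset_cover hAmple (S.isCompact_support hf)
    (W := fun x => f ⁻¹' {f x} ∩ support f)
    fun x hx => ((hf.1.isOpen_fiber _).inter (S.isClopen_support hf).2).mem_nhds ⟨rfl, hx⟩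
  have h𝒮' : ∀ B ∈ 𝒮, S.IsCompactOpenBisection B ∧ B ⊆ support f ∧ ∃ a, ∀ x ∈ B, f x = a := by
    intro B hB
    obtain ⟨hBc, x, -, hBx⟩ := h𝒮 B hB
    exact ⟨hBc, hBx.trans inter_subset_right, f x, fun y hy => (hBx hy).1⟩
  simpa using
    S.indicator_mem_idealOf_of_finset_cover hfU 𝒮 h𝒮' isClopen_univ (by simpa using hcover)

lemma mem_idealOf_iff [T2Space G] (hAmple : S.IsAmple) {U : Set G} {f : G → R} :
    f ∈ S.idealOf R U ↔ f ∈ S.SteinSet R ∧ support f ⊆ S.d ⁻¹' U :=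
  ⟨fun hf => ⟨S.idealOf_subset_steinSet U hf, S.support_subset_of_mem_idealOf hf⟩,
    fun hf => S.mem_idealOf_of_support_subset hAmple hf.1 hf.2⟩

/-- For `f ∈ A_R(G)` only finitely many factorisations `x = a b` have `f a ≠ 0`: `a` is pinned
down by `r a = r x` inside each of finitely many bisections covering `support f`. -/
lemma finite_factorizations (hAmple : S.IsAmple) {f : G → R} (hf : f ∈ S.SteinSet R) (x : G) :
    {p : G × G | S.d p.1 = S.r p.2 ∧ S.mul p.1 p.2 = x ∧ f p.1 ≠ 0}.Finite := by
  obtain ⟨𝒮, h𝒮, hcover⟩ :=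
    S.exists_finset_cover hAmple (S.isCompact_support hf) (W := fun _ => univ)
      fun _ _ => Filter.univ_mem
  refine (𝒮.finite_toSet.biUnion fun B _ =>
    (Set.Subsingleton.finite (s := {p : G × G | S.d p.1 = S.r p.2 ∧ S.mul p.1 p.2 = x ∧ p.1 ∈ B})
      ?_)).subset fun p hp => ?_
  · rintro ⟨a, b⟩ ⟨hab, rfl, ha⟩ ⟨a', b'⟩ ⟨hab', hx, ha'⟩
    dsimp only at *
    obtain rfl : a' = a :=
      (h𝒮 B ‹_›).1.injOn_r ha' ha (by rw [← S.r_mul_eq hab', hx, S.r_mul_eq hab])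
    obtain rfl : b' = b := by
      rw [← S.inv_mul_cancel_left' hab', hx, S.inv_mul_cancel_left' hab]
    rfl
  · obtain ⟨B, hB, hpB⟩ := mem_iUnion₂.1 (hcover hp.2.2)
    exact mem_iUnion₂.2 ⟨B, hB, hp.1, hp.2.1, hpB⟩

lemma conv_add_right (hAmple : S.IsAmple) {f : G → R} (hf : f ∈ S.SteinSet R) (g₁ g₂ : G → R) :
    S.conv f (g₁ + g₂) = S.conv f g₁ + S.conv f g₂ := funext fun x => by
  simp only [Pi.add_apply, S.conv_apply_eq_finsum_factorizations f _ x,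
    ← finsum_mem_add_distrib (S.finite_factorizations hAmple hf x), mul_add]

lemma conv_smul_right (hAmple : S.IsAmple) {f : G → R} (hf : f ∈ S.SteinSet R) (a : R)
    (g : G → R) : S.conv f (a • g) = a • S.conv f g := funext fun x => by
  simp only [Pi.smul_apply, smul_eq_mul, S.conv_apply_eq_finsum_factorizations f _ x,
    mul_finsum_mem' _ a (S.finite_factorizations hAmple hf x), mul_left_comm]

lemma isLocallyConstant_conv_indicator [T2Space G] (hTop : S.IsTopological) {C : Set G}
    (hC : S.IsCompactOpenBisection C) {f : G → R} (hf : IsLocallyConstant f) (b : R) :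
    IsLocallyConstant (S.conv f (C.indicator fun _ => b)) := by
  refine (IsLocallyConstant.iff_eventually_eq _).2 fun x => ?_
  by_cases hx : S.d x ∈ S.d '' C
  · have : Nonempty G := ⟨x⟩
    set σ := invFunOn S.d C
    have hσ : ∀ y ∈ S.d ⁻¹' (S.d '' C), σ (S.d y) ∈ C ∧ S.d (σ (S.d y)) = S.d y :=
      fun _ hy => invFunOn_pos hy
    have hO : S.d ⁻¹' (S.d '' C) ∈ 𝓝 x :=
      ((hC.isOpen_d_image subset_rfl hC.isOpen).preimage (S.continuous_d hTop)).mem_nhds hx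
    -- `y ↦ y σ(d y)⁻¹` is continuous near `x`, and `f` is locally constant at its value
    have hρ : ContinuousAt (fun y => S.mul y (S.inv (σ (S.d y)))) x :=
      (S.continuousOn_mul hTop continuousOn_id ((S.continuous_inv hTop).comp_continuousOn
        ((S.continuousOn_invFunOn_d hC.2).comp (S.continuous_d hTop).continuousOn fun _ hy => hy))
        fun y hy => by
          simp only [Function.comp, id]; rw [S.r_inv, (hσ y hy).2]).continuousAt hO
    filter_upwards [hO, hρ.eventually ((IsLocallyConstant.iff_eventually_eq f).1 hf _)]
      with y hy hfy
    rw [S.conv_indicator_apply hC.injOn_d f b (hσ y hy).1 (hσ y hy).2,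
      S.conv_indicator_apply hC.injOn_d f b (hσ x hx).1 (hσ x hx).2, hfy]
  · filter_upwards [(hC.isCompact.image (S.continuous_d hTop)).isClosed.isOpen_compl.preimage
      (S.continuous_d hTop) |>.mem_nhds hx] with y hy
    rw [S.conv_indicator_apply_of_notMem f b hy, S.conv_indicator_apply_of_notMem f b hx]

lemma conv_indicator_mem_steinSet [T2Space G] (hTop : S.IsTopological) {C : Set G}
    (hC : S.IsCompactOpenBisection C) {f : G → R} (hf : f ∈ S.SteinSet R) (b : R) :
    S.conv f (C.indicator fun _ => b) ∈ S.SteinSet R := by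
  refine ⟨S.isLocallyConstant_conv_indicator hTop hC hf.1 b, HasCompactSupport.intro
    (S.isCompact_setMul hTop hf.2 hC.isCompact) fun x hx => ?_⟩
  by_contra hne
  obtain ⟨a, ha, c, hc, hac, rfl⟩ := S.support_conv_subset _ _ hne
  exact hx ⟨a, subset_tsupport f ha, c, mem_of_indicator_ne_zero hc, hac, rfl⟩

lemma conv_mem_steinSet [T2Space G] (hTop : S.IsTopological) (hAmple : S.IsAmple)
    {f g : G → R} (hf : f ∈ S.SteinSet R) (hg : g ∈ S.SteinSet R) :
    S.conv f g ∈ S.SteinSet R := by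
  have hg' : g ∈ S.idealOf R univ := S.mem_idealOf_of_support_subset hAmple hg (subset_univ _)
  clear hg
  induction hg' using Submodule.span_induction with
  | mem _ h =>
    obtain ⟨C, hC, -, rfl⟩ := h
    exact S.conv_indicator_mem_steinSet hTop hC hf 1
  | zero =>
    rw [show S.conv f 0 = 0 from funext fun _ => S.conv_apply_eq_zero fun _ _ _ _ => mul_zero _]
    exact (S.steinbergSubmodule R).zero_mem
  | add g₁ g₂ _ _ h₁ h₂ =>
    rw [S.conv_add_right hAmple hf]
    exact (S.steinbergSubmodule R).add_mem h₁ h₂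
  | smul a g _ h =>
    rw [S.conv_smul_right hAmple hf]
    exact (S.steinbergSubmodule R).smul_mem a h

end SteinbergAlgebra

section Ideals

variable [TopologicalSpace G] {R : Type*} [CommRing R]

variable {S} {I : Set (G → R)}

lemma IsIdealOf.subset_steinSet (hI : S.IsIdealOf I) : I ⊆ S.SteinSet R := hI.1

lemma IsIdealOf.zero_mem (hI : S.IsIdealOf I) : (0 : G → R) ∈ I := hI.2.1

lemma IsIdealOf.sub_mem (hI : S.IsIdealOf I) {f g : G → R} (hf : f ∈ I) (hg : g ∈ I) :
    f - g ∈ I :=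
  hI.2.2.1 f hf g hg

lemma IsIdealOf.conv_mem_right (hI : S.IsIdealOf I) {f g : G → R} (hf : f ∈ I)
    (hg : g ∈ S.SteinSet R) : S.conv f g ∈ I :=
  (hI.2.2.2 f hf g hg).1

lemma IsIdealOf.conv_mem_left (hI : S.IsIdealOf I) {f g : G → R} (hg : g ∈ S.SteinSet R)
    (hf : f ∈ I) : S.conv g f ∈ I :=
  (hI.2.2.2 f hf g hg).2

lemma IsIdealOf.add_mem (hI : S.IsIdealOf I) {f g : G → R} (hf : f ∈ I) (hg : g ∈ I) :
    f + g ∈ I := by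
  simpa using hI.sub_mem hf (hI.sub_mem hI.zero_mem hg)

lemma IsIdealOf.smul_mem [T2Space G] (hTop : S.IsTopological) (hAmple : S.IsAmple)
    (hI : S.IsIdealOf I) (a : R) {f : G → R} (hf : f ∈ I) : a • f ∈ I := by
  obtain ⟨W, hWc, hWo, hrW, hWG⟩ := S.exists_isCompact_isOpen_between hAmple
    ((S.isCompact_support (hI.subset_steinSet hf)).image (S.continuous_r hTop))
    (S.isOpen_unitSpace hTop (S.isEtale_of_isAmple hAmple))
    (image_subset_iff.2 fun x _ => S.r_mem_unitSpace x)
  have : S.conv (W.indicator fun _ => a) f = a • f := by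
    rw [S.unit_indicator_conv hWG]
    exact indicator_eq_self.2 fun x hx => hrW ⟨x, right_ne_zero_of_mul hx, rfl⟩
  exact this ▸ hI.conv_mem_left (S.indicator_const_mem_steinSet hWc hWo a) hf

variable (S)

lemma union_indicator_mem (hI : S.IsIdealOf I) {V W : Set G} (hV : V ⊆ S.unitSpace)
    (hW : W ⊆ S.unitSpace)
    (hVI : V.indicator (fun _ => (1 : R)) ∈ I) (hWI : W.indicator (fun _ => (1 : R)) ∈ I) :
    (V ∪ W).indicator (fun _ => (1 : R)) ∈ I := by
  have hVW : S.conv (V.indicator fun _ => 1) (W.indicator fun _ => 1) =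
      (V ∩ W).indicator fun _ => (1 : R) := by
    rw [S.unit_indicator_conv hV]
    simp only [one_mul]
    rw [indicator_indicator]
    congr 1
    ext x
    exact and_congr_left fun hx => by rw [mem_preimage, S.r_eq_self (hW hx)]
  rw [eq_sub_of_add_eq (indicator_union_add_inter (fun _ => (1 : R)) V W), ← hVW]
  exact hI.sub_mem (hI.add_mem hVI hWI) (hI.conv_mem_right hVI (hI.subset_steinSet hWI))

lemma exists_indicator_mem_superset (hI : S.IsIdealOf I) {K : Set G} (hK : IsCompact K)
    (hloc : ∀ u ∈ K, ∃ W, IsCompact W ∧ IsOpen W ∧ W ⊆ S.unitSpace ∧ u ∈ W ∧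
      W.indicator (fun _ => (1 : R)) ∈ I) :
    ∃ W, IsCompact W ∧ IsOpen W ∧ W ⊆ S.unitSpace ∧ K ⊆ W ∧
      W.indicator (fun _ => (1 : R)) ∈ I := by
  refine hK.induction_on (p := fun K => ∃ W, IsCompact W ∧ IsOpen W ∧ W ⊆ S.unitSpace ∧ K ⊆ W ∧
      W.indicator (fun _ => (1 : R)) ∈ I) ?_ ?_ ?_ fun u hu => ?_
  · exact ⟨∅, isCompact_empty, isOpen_empty, empty_subset _, subset_rfl,
      by rw [indicator_empty]; exact hI.zero_mem⟩
  · rintro s t hst ⟨W, hWc, hWo, hWG, htW, hWI⟩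
    exact ⟨W, hWc, hWo, hWG, hst.trans htW, hWI⟩
  · rintro s t ⟨V, hVc, hVo, hVG, hsV, hVI⟩ ⟨W, hWc, hWo, hWG, htW, hWI⟩
    exact ⟨V ∪ W, hVc.union hWc, hVo.union hWo, union_subset hVG hWG,
      union_subset_union hsV htW, S.union_indicator_mem hI hVG hWG hVI hWI⟩
  · obtain ⟨W, hWc, hWo, hWG, huW, hWI⟩ := hloc u hu
    exact ⟨W, mem_nhdsWithin_of_mem_nhds (hWo.mem_nhds huW), W, hWc, hWo, hWG, subset_rfl, hWI⟩

lemma isIdealOf_idealOf [T2Space G] (hTop : S.IsTopological) (hAmple : S.IsAmple)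
    {U : Set G} (hU : S.IsInvariant U) : S.IsIdealOf (S.idealOf R U) := by
  refine ⟨S.idealOf_subset_steinSet U, zero_mem (Submodule.span R _),
    fun f hf g hg => (Submodule.span R _).sub_mem hf hg, fun f hf g hg => ?_⟩
  simp only [S.mem_idealOf_iff hAmple] at hf ⊢
  refine ⟨⟨S.conv_mem_steinSet hTop hAmple hf.1 hg, fun x hx => ?_⟩,
    ⟨S.conv_mem_steinSet hTop hAmple hg hf.1, fun x hx => ?_⟩⟩
  · obtain ⟨a, ha, b, -, hab, rfl⟩ := S.support_conv_subset f g hx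
    -- `r b = d a ∈ U`, and invariance applied to `b⁻¹` moves this to `d b`
    have := hU (S.inv b) (by rw [S.d_inv, ← hab]; exact hf.2 ha)
    rwa [S.r_inv, ← S.d_mul_eq hab] at this
  · obtain ⟨a, -, b, hb, hab, rfl⟩ := S.support_conv_subset g f hx
    rw [mem_preimage, S.d_mul_eq hab]
    exact hf.2 hb

lemma isGradedIdealOf_idealOf [T2Space G] (hTop : S.IsTopological) (hAmple : S.IsAmple)
    {U : Set G} (hU : S.IsInvariant U) {Γ : Type*} (c : G → Γ)
    (hc : ∀ γ : Γ, IsOpen (c ⁻¹' {γ})) : S.IsGradedIdealOf c (S.idealOf R U) := by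
  refine ⟨S.isIdealOf_idealOf hTop hAmple hU, fun f hf γ => ?_⟩
  rw [S.mem_idealOf_iff hAmple] at hf ⊢
  exact ⟨S.indicator_mem_steinSet hf.1
      ((IsLocallyConstant.iff_isOpen_fiber.2 hc).isClopen_fiber γ),
    fun _ hx => hf.2 (indicator_apply_ne_zero.1 hx).2⟩

lemma isRelOpen_unitSupport (hI : I ⊆ S.SteinSet R) : S.IsRelOpen (S.unitSupport I) := by
  refine ⟨fun u hu => hu.1, ⋃ f ∈ I, support f,
    isOpen_biUnion fun f hf => (S.isClopen_support (hI hf)).2, ?_⟩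
  ext u
  simp only [unitSupport, mem_ofPred_eq, mem_inter_iff, mem_iUnion₂, mem_support, exists_prop]
  tauto

/-- Convolving with `1_{B⁻¹}` on the left carries the value of `f` at `x ∈ B` to `d x`. -/
lemma d_mem_unitSupport [T2Space G] (hTop : S.IsTopological) (hAmple : S.IsAmple)
    (hI : S.IsIdealOf I) {f : G → R} (hf : f ∈ I) {x : G} (hx : f x ≠ 0) :
    S.d x ∈ S.unitSupport I := by
  obtain ⟨B, hxB, hB⟩ := S.exists_mem_isCompactOpenBisection hAmple x
  have hB' := hB.inv hTop
  refine ⟨S.d_mem_unitSpace x, _,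
    hI.conv_mem_left (S.indicator_const_mem_steinSet hB'.isCompact hB'.isOpen 1) hf, ?_⟩
  rwa [S.indicator_conv_apply hB'.injOn_r 1 f ⟨x, hxB, rfl⟩ (by rw [S.r_inv, S.r_d]),
    S.inv_inv, S.mul_d_self, one_mul]

lemma isInvariant_unitSupport [T2Space G] (hTop : S.IsTopological) (hAmple : S.IsAmple)
    (hI : S.IsIdealOf I) : S.IsInvariant (S.unitSupport I) := by
  rintro γ ⟨-, f, hf, hfγ⟩
  obtain ⟨B, hγB, hB⟩ := S.exists_mem_isCompactOpenBisection hAmple γ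
  have hB' := hB.inv hTop
  have hval : S.conv f ((S.inv '' B).indicator fun _ => (1 : R)) (S.inv γ) = f (S.d γ) := by
    rw [S.conv_indicator_apply hB'.injOn_d f 1 ⟨γ, hγB, rfl⟩ rfl, S.inv_inv, mul_one]; rfl
  rw [← S.d_inv γ]
  exact S.d_mem_unitSupport hTop hAmple hI
    (hI.conv_mem_right hf (S.indicator_const_mem_steinSet hB'.isCompact hB'.isOpen 1))
    (hval ▸ hfγ)

lemma subset_idealOf_unitSupport [T2Space G] (hTop : S.IsTopological) (hAmple : S.IsAmple)
    (hI : S.IsIdealOf I) : I ⊆ S.idealOf R (S.unitSupport I) := fun _ hf =>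
  (S.mem_idealOf_iff hAmple).2
    ⟨hI.subset_steinSet hf, fun _ hx => S.d_mem_unitSupport hTop hAmple hI hf hx⟩

lemma unitSupport_idealOf [T2Space G] [Nontrivial R] (hTop : S.IsTopological)
    (hAmple : S.IsAmple) {U : Set G} (hU : S.IsRelOpen U) :
    S.unitSupport (S.idealOf R U) = U := by
  rw [S.isRelOpen_iff hTop (S.isEtale_of_isAmple hAmple)] at hU
  refine Subset.antisymm (fun u ⟨hu, _, hf, hfu⟩ => ?_) fun u hu => ?_
  · simpa [S.d_eq_self hu] using S.support_subset_of_mem_idealOf hf hfu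
  · obtain ⟨B, huB, hBU, hB⟩ := hAmple u U hu hU.1
    refine ⟨hU.2 hu, B.indicator fun _ => 1, Submodule.subset_span ⟨B, hB, ?_, rfl⟩, by simp [huB]⟩
    rwa [S.d_image_of_subset_unitSpace (hBU.trans hU.2)]

end Ideals

section StronglyEffective

variable [TopologicalSpace G] [T2Space G]

variable {H D : Set G}

lemma closure_orbit_subset_unitSpace (hTop : S.IsTopological) (u : G) :
    closure (S.orbit u) ⊆ S.unitSpace :=
  closure_minimal (S.orbit_subset_unitSpace u) (S.isClosed_unitSpace hTop)

lemma relInt_restrictG_closure_orbit (hTop : S.IsTopological) (hEt : S.IsEtale)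
    (hSE : S.IsStronglyEffectiveOn H) {u : G} (hu : u ∈ S.unitSpace) :
    S.relInt (H ∩ S.restrictG (closure (S.orbit u)))
      (S.IsoSet ∩ (H ∩ S.restrictG (closure (S.orbit u)))) = closure (S.orbit u) :=
  hSE _ (S.closure_orbit_subset_unitSpace hTop u) ⟨u, subset_closure (S.mem_orbit_self hu)⟩
    ⟨_, isClosed_closure, (inter_eq_left.2 (S.closure_orbit_subset_unitSpace hTop u)).symm⟩
    fun γ _ => (S.isInvariant_orbit u).closure hTop hEt γ

/-- Either some `v ∈ V₀ ∩ D` is fixed by no arrow of `B`, and a neighbourhood of `v` works, or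
`B ∩ d⁻¹ V₀` is an open set of isotropy of `H|_D`, which effectiveness forbids as `B` misses
the units. -/
lemma exists_isOpen_avoiding_bisection (hTop : S.IsTopological)
    (hD : S.relInt (H ∩ S.restrictG D) (S.IsoSet ∩ (H ∩ S.restrictG D)) = D)
    (hDG : D ⊆ S.unitSpace) {B : Set G} (hB : S.IsCompactOpenBisection B) (hBH : B ⊆ H)
    (hBG : Disjoint B S.unitSpace) {V₀ : Set G} (hV₀ : IsOpen V₀) (hV₀D : (V₀ ∩ D).Nonempty) :
    ∃ V ⊆ V₀, IsOpen V ∧ (V ∩ D).Nonempty ∧ ∀ x ∈ B, ¬(S.d x ∈ V ∧ S.r x ∈ V) := by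
  by_cases h : ∃ v ∈ V₀ ∩ D, ∀ x ∈ B, ¬(S.d x = v ∧ S.r x = v)
  · obtain ⟨v, hv, hvB⟩ := h
    obtain ⟨V, hV, hvV, hVB⟩ := S.exists_isOpen_not_fixed hTop hB.isCompact hvB
    exact ⟨V₀ ∩ V, inter_subset_left, hV₀.inter hV, ⟨v, ⟨hv.1, hvV⟩, hv.2⟩,
      fun x hx hxV => hVB x hx ⟨hxV.1.2, hxV.2.2⟩⟩
  push Not at h
  obtain ⟨v, hv⟩ := hV₀D
  obtain ⟨x, hxB, hxd, hxr⟩ := h v hv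
  have hx : x ∈ S.relInt (H ∩ S.restrictG D) (S.IsoSet ∩ (H ∩ S.restrictG D)) := by
    refine ⟨⟨hBH hxB, hxd ▸ hv.2, hxr ▸ hv.2⟩, B ∩ S.d ⁻¹' V₀,
      hB.isOpen.inter (hV₀.preimage (S.continuous_d hTop)),
      ⟨hxB, show S.d x ∈ V₀ from hxd ▸ hv.1⟩, ?_⟩
    rintro y ⟨⟨hyB, hyV₀⟩, hyH⟩
    obtain ⟨y', hy'B, hy'd, hy'r⟩ := h (S.d y) ⟨hyV₀, hyH.2.1⟩
    obtain rfl : y' = y := hB.injOn_d hy'B hyB hy'd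
    exact ⟨hy'r.symm, hyH⟩
  rw [hD] at hx
  exact (disjoint_left.1 hBG hxB (hDG hx)).elim

lemma exists_isOpen_avoiding_finset (hTop : S.IsTopological)
    (hD : S.relInt (H ∩ S.restrictG D) (S.IsoSet ∩ (H ∩ S.restrictG D)) = D)
    (hDG : D ⊆ S.unitSpace) (𝒮 : Finset (Set G))
    (h𝒮 : ∀ B ∈ 𝒮, S.IsCompactOpenBisection B ∧ B ⊆ H ∧ Disjoint B S.unitSpace)
    {V₀ : Set G} (hV₀ : IsOpen V₀) (hV₀D : (V₀ ∩ D).Nonempty) :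
    ∃ V ⊆ V₀, IsOpen V ∧ (V ∩ D).Nonempty ∧ ∀ B ∈ 𝒮, ∀ x ∈ B, ¬(S.d x ∈ V ∧ S.r x ∈ V) := by
  classical
  induction 𝒮 using Finset.induction_on generalizing V₀ with
  | empty => exact ⟨V₀, subset_rfl, hV₀, hV₀D, by simp⟩
  | insert B 𝒮 _ ih =>
    obtain ⟨hB, hBH, hBG⟩ := h𝒮 B (Finset.mem_insert_self B 𝒮)
    obtain ⟨V₁, hV₁V₀, hV₁, hV₁D, hV₁B⟩ :=
      S.exists_isOpen_avoiding_bisection hTop hD hDG hB hBH hBG hV₀ hV₀D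
    obtain ⟨V, hVV₁, hV, hVD, hV𝒮⟩ :=
      ih (fun B' hB' => h𝒮 B' (Finset.mem_insert_of_mem hB')) hV₁ hV₁D
    refine ⟨V, hVV₁.trans hV₁V₀, hV, hVD, fun B' hB' x hx hxV => ?_⟩
    rcases Finset.mem_insert.1 hB' with rfl | hB'
    · exact hV₁B x hx ⟨hVV₁ hxV.1, hVV₁ hxV.2⟩
    · exact hV𝒮 B' hB' x hx hxV

/-- Effectiveness of `H` over the orbit closure of `u` shrinks a neighbourhood of `u` on which
`f = f u` until no non-unit arrow in the support of `f` both starts and ends there; cutting `f`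
down to a compact open `V` inside it that meets the orbit then gives `1_V`. -/
lemma exists_indicator_mem_near_orbit {k : Type*} [Field k] (hTop : S.IsTopological)
    (hAmple : S.IsAmple) (hH : IsOpen H) (hSE : S.IsStronglyEffectiveOn H)
    {I : Set (G → k)} (hI : S.IsIdealOf I) {f : G → k} (hf : f ∈ I) (hfH : support f ⊆ H)
    {u : G} (hu : u ∈ S.unitSpace) (hfu : f u ≠ 0) :
    ∃ v ∈ S.orbit u, ∃ V, IsCompact V ∧ IsOpen V ∧ V ⊆ S.unitSpace ∧ v ∈ V ∧
      V.indicator (fun _ => (1 : k)) ∈ I := by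
  have hEt := S.isEtale_of_isAmple hAmple
  have hG0 := S.isOpen_unitSpace hTop hEt
  have hfA := hI.subset_steinSet hf
  obtain ⟨𝒮, h𝒮, hcover⟩ := S.exists_finset_cover hAmple
    ((S.isCompact_support hfA).inter_right hG0.isClosed_compl) (W := fun _ => H ∩ S.unitSpaceᶜ)
    fun x hx => (hH.inter (S.isClosed_unitSpace hTop).isOpen_compl).mem_nhds ⟨hfH hx.1, hx.2⟩
  have h𝒮' : ∀ B ∈ 𝒮, S.IsCompactOpenBisection B ∧ B ⊆ H ∧ Disjoint B S.unitSpace := by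
    intro B hB
    obtain ⟨hBc, -, -, hBW⟩ := h𝒮 B hB
    exact ⟨hBc, hBW.trans inter_subset_left, disjoint_left.2 fun x hx => (hBW hx).2⟩
  obtain ⟨V, hVf, hV, ⟨w, hwV, hwD⟩, hV𝒮⟩ := S.exists_isOpen_avoiding_finset hTop
    (S.relInt_restrictG_closure_orbit hTop hEt hSE hu) (S.closure_orbit_subset_unitSpace hTop u)
    𝒮 h𝒮' ((hfA.1.isOpen_fiber (f u)).inter hG0)
    ⟨u, ⟨rfl, hu⟩, subset_closure (S.mem_orbit_self hu)⟩
  obtain ⟨v, hvV, hvu⟩ := mem_closure_iff.1 hwD V hV hwV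
  obtain ⟨V', hvV', hV'V, hV'c, hV'⟩ := hAmple v V hvV hV
  have hV'G : V' ⊆ S.unitSpace := fun x hx => (hVf (hV'V hx)).2
  refine ⟨v, hvu, V', hV'c, hV'.1, hV'G, hvV', ?_⟩
  have hV'A : ∀ b : k, V'.indicator (fun _ => b) ∈ S.SteinSet k :=
    S.indicator_const_mem_steinSet hV'c hV'.1
  rw [← S.unit_indicator_conv_conv_unit_indicator hV'G (mul_inv_cancel₀ hfu)
    (fun x hx => (hVf (hV'V hx)).1) fun x hx hd hr => ?_]
  · exact hI.conv_mem_left (hV'A 1) (hI.conv_mem_right hf (hV'A (f u)⁻¹))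
  · by_contra hfx
    obtain ⟨B, hB, hxB⟩ := mem_iUnion₂.1 (hcover ⟨hfx, hx⟩)
    exact hV𝒮 B hB x hxB ⟨hV'V hd, hV'V hr⟩

/-- Conjugating by a bisection through an arrow `δ : u → v` moves `1_V` from `v` to `u`. -/
lemma exists_indicator_mem_of_mem_orbit {R : Type*} [CommRing R] (hTop : S.IsTopological)
    (hAmple : S.IsAmple) {I : Set (G → R)} (hI : S.IsIdealOf I) {V : Set G} (hVc : IsCompact V)
    (hVo : IsOpen V) (hVG : V ⊆ S.unitSpace) (hVI : V.indicator (fun _ => (1 : R)) ∈ I)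
    {u v : G} (hv : v ∈ V) (hvu : v ∈ S.orbit u) :
    ∃ W, IsCompact W ∧ IsOpen W ∧ W ⊆ S.unitSpace ∧ u ∈ W ∧
      W.indicator (fun _ => (1 : R)) ∈ I := by
  obtain ⟨δ, hδu, rfl⟩ := hvu
  obtain ⟨B, hδB, hB⟩ := S.exists_mem_isCompactOpenBisection hAmple δ
  have hB' := hB.inv hTop
  refine ⟨S.d '' (B ∩ S.r ⁻¹' V),
    (hB.isCompact.inter_right (hVc.isClosed.preimage (S.continuous_r hTop))).image
      (S.continuous_d hTop),
    hB.isOpen_d_image inter_subset_left (hB.isOpen.inter (hVo.preimage (S.continuous_r hTop))),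
    image_subset_iff.2 fun x _ => S.d_mem_unitSpace x, ⟨δ, ⟨hδB, hv⟩, hδu⟩, ?_⟩
  rw [← S.inv_indicator_conv_unit_indicator_conv hB.injOn_d hB.injOn_r hVG]
  exact hI.conv_mem_left (S.indicator_const_mem_steinSet hB'.isCompact hB'.isOpen 1)
    (hI.conv_mem_right hVI (S.indicator_const_mem_steinSet hB.isCompact hB.isOpen 1))

lemma exists_indicator_mem_of_mem_unitSupport {k : Type*} [Field k] (hTop : S.IsTopological)
    (hAmple : S.IsAmple) {Γ : Type*} [Group Γ] (c : G → Γ) (hc_cont : ∀ γ : Γ, IsOpen (c ⁻¹' {γ}))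
    (hc_mul : ∀ x y : G, S.d x = S.r y → c (S.mul x y) = c x * c y)
    (hSE : S.IsStronglyEffectiveOn (c ⁻¹' {1})) {I : Set (G → k)} (hI : S.IsGradedIdealOf c I)
    {u : G} (hu : u ∈ S.unitSupport I) :
    ∃ W, IsCompact W ∧ IsOpen W ∧ W ⊆ S.unitSpace ∧ u ∈ W ∧
      W.indicator (fun _ => (1 : k)) ∈ I := by
  obtain ⟨hu, f, hf, hfu⟩ := hu
  -- the degree-one component of `f` is in `I` and still nonzero at the unit `u`
  obtain ⟨v, hvu, V, hVc, hVo, hVG, hvV, hVI⟩ := S.exists_indicator_mem_near_orbit hTop hAmple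
    (hc_cont 1) hSE hI.1 (hI.2 f hf 1) (fun _ hx => (indicator_apply_ne_zero.1 hx).1) hu
    (by rwa [indicator_of_mem (show u ∈ {x | c x = 1} from
      S.map_eq_one_of_mem_unitSpace c hc_mul hu)])
  exact S.exists_indicator_mem_of_mem_orbit hTop hAmple hI.1 hVc hVo hVG hVI hvV hvu

lemma idealOf_unitSupport {k : Type*} [Field k] (hTop : S.IsTopological) (hAmple : S.IsAmple)
    {Γ : Type*} [Group Γ] (c : G → Γ) (hc_cont : ∀ γ : Γ, IsOpen (c ⁻¹' {γ}))
    (hc_mul : ∀ x y : G, S.d x = S.r y → c (S.mul x y) = c x * c y)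
    (hSE : S.IsStronglyEffectiveOn (c ⁻¹' {1})) {I : Set (G → k)} (hI : S.IsGradedIdealOf c I) :
    S.idealOf k (S.unitSupport I) = I := by
  refine Subset.antisymm (fun f hf => ?_) (S.subset_idealOf_unitSupport hTop hAmple hI.1)
  induction hf using Submodule.span_induction with
  | mem _ h =>
    obtain ⟨B, hB, hBI, rfl⟩ := h
    obtain ⟨W, -, -, hWG, hBW, hWI⟩ := S.exists_indicator_mem_superset hI.1
      (hB.isCompact.image (S.continuous_d hTop)) fun u hu =>
        S.exists_indicator_mem_of_mem_unitSupport hTop hAmple c hc_cont hc_mul hSE hI (hBI hu)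
    have h1B : S.conv (B.indicator fun _ => 1) (W.indicator fun _ => 1) =
        B.indicator fun _ => (1 : k) := by
      rw [S.conv_unit_indicator hWG]
      simp only [mul_one]
      rw [indicator_indicator, inter_eq_right.2 (image_subset_iff.1 hBW)]
    exact h1B ▸ hI.1.conv_mem_left (S.indicator_const_mem_steinSet hB.isCompact hB.isOpen 1) hWI
  | zero => exact hI.1.zero_mem
  | add f g _ _ hf hg => exact hI.1.add_mem hf hg
  | smul a f _ hf => exact hI.1.smul_mem hTop hAmple a hf

end StronglyEffective

end GroupoidStr

/-- `[CEP]`. Let `G` be a `Γ`-graded Hausdorff ample groupoid whose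
`ε`-component `G_ε = c⁻¹(ε)` is strongly effective, and `k` a field.  The
correspondence `U ↦ I(U)` is a lattice isomorphism from the lattice of open invariant
subsets of `G⁰` onto the lattice of graded ideals of `A_k(G)`. -/
theorem steinberg_graded_ideal_lattice {G : Type*} [TopologicalSpace G]
    (S : GroupoidStr G) [T2Space G] (hTop : S.IsTopological) (hAmple : S.IsAmple)
    {Γ : Type*} [Group Γ] (c : G → Γ)
    (hc_cont : ∀ γ : Γ, IsOpen (c ⁻¹' {γ}))
    (hc_mul : ∀ x y : G, S.d x = S.r y → c (S.mul x y) = c x * c y)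
    (hSE : S.IsStronglyEffectiveOn (c ⁻¹' {1}))
    (k : Type*) [Field k] :
    (∀ U : Set G, S.IsRelOpen U → S.IsInvariant U →
      S.IsGradedIdealOf c (S.idealOf k U)) ∧
    Set.BijOn (fun U : Set G => S.idealOf k U)
      {U : Set G | S.IsRelOpen U ∧ S.IsInvariant U}
      {I : Set (G → k) | S.IsGradedIdealOf c I} ∧
    (∀ U V : Set G, S.IsRelOpen U → S.IsInvariant U → S.IsRelOpen V → S.IsInvariant V →
      (U ⊆ V ↔ S.idealOf k U ⊆ S.idealOf k V)) := by
  have hgraded : ∀ U : Set G, S.IsRelOpen U → S.IsInvariant U →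
      S.IsGradedIdealOf c (S.idealOf k U) :=
    fun U _ hU => S.isGradedIdealOf_idealOf hTop hAmple hU c hc_cont
  have hrecover : ∀ U, S.IsRelOpen U → S.unitSupport (S.idealOf k U) = U :=
    fun U hU => S.unitSupport_idealOf hTop hAmple hU
  refine ⟨hgraded, ⟨fun U hU => hgraded U hU.1 hU.2, fun U hU V hV hUV => ?_, fun I hI => ?_⟩,
    fun U V hU _ hV _ => ⟨S.idealOf_mono, fun hUV => ?_⟩⟩
  · rw [← hrecover U hU.1, ← hrecover V hV.1]
    exact congrArg S.unitSupport hUV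
  · exact ⟨S.unitSupport I, ⟨S.isRelOpen_unitSupport hI.1.subset_steinSet,
      S.isInvariant_unitSupport hTop hAmple hI.1⟩,
      S.idealOf_unitSupport hTop hAmple c hc_cont hc_mul hSE hI⟩
  · rw [← hrecover U hU, ← hrecover V hV]
    exact S.unitSupport_mono hUV
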